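/- arXiv:1909.07240 — 2 statements merged into one kernel-verified Lean document; each statement's English description precedes it below -/
import Mathlib

section
/- Let U,V,W be finite-dimensional Γ-graded vector spaces with commutation factor ε, let f ∈ Alt^i_ε(U,V) and g ∈ Alt^j_ε(W,U). Then the exterior composition f ∘ g, defined as the sum over shuffle permutations σ ∈ S([1,j],…,[(i−1)j+1,ij]) of π̃(σ)(f*g), where (f*g)(v₁,…,v_{ij}) := f(g(v₁⊗…⊗v_j)⊗…⊗g(v_{(i−1)j+1}⊗…⊗v_{ij})), is an element of Alt^{ij}_ε(W,V). -/
/-- A commutation factor of an abelian group `Γ` with values in `k`. -/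
structure CommutationFactor (k Γ : Type*) [Field k] [AddCommGroup Γ] where
  ε : Γ → Γ → k
  mul_symm : ∀ a b, ε a b * ε b a = 1
  add_fst : ∀ a b c, ε (a + b) c = ε a c * ε b c
  add_snd : ∀ a b c, ε a (b + c) = ε a b * ε a c

/-- The multiplier `p(σ; v₁,…,v_n)` of a permutation with respect to degrees
`a : Fin n → Γ`. -/
def pMult {k Γ : Type*} [Field k] [AddCommGroup Γ] (ε : Γ → Γ → k) {n : ℕ}
    (σ : Equiv.Perm (Fin n)) (a : Fin n → Γ) : k :=
  ((Equiv.Perm.sign σ : ℤ) : k) *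
    ∏ q ∈ Finset.univ.filter
      (fun q : Fin n × Fin n => q.1 < q.2 ∧ σ⁻¹ q.2 < σ⁻¹ q.1), ε (a q.1) (a q.2)

/-- `f` is an ε-alternating multilinear map. -/
def IsEpsAlt {k Γ T U : Type*} [Field k] [AddCommGroup Γ]
    [AddCommGroup T] [Module k T] [AddCommGroup U] [Module k U]
    (ε : Γ → Γ → k) (𝒯 : Γ → Submodule k T) {n : ℕ}
    (f : MultilinearMap k (fun _ : Fin n => T) U) : Prop :=
  ∀ (a : Fin n → Γ) (v : Fin n → T), (∀ m, v m ∈ 𝒯 (a m)) →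
    ∀ l m : Fin n, (l : ℕ) + 1 = (m : ℕ) →
      f v = (-(ε (a l) (a m))) • f (fun q => v (Equiv.swap l m q))

/-- The index `l*j + m` of the `m`-th element of the `l`-th block. -/
def blockIdx {i j : ℕ} (l : Fin i) (m : Fin j) : Fin (i * j) :=
  ⟨l.1 * j + m.1, by
    calc l.1 * j + m.1 < l.1 * j + j := by omega
    _ = (l.1 + 1) * j := by ring
    _ ≤ i * j := Nat.mul_le_mul_right j l.2⟩

/-- The value of the exterior composition `f ∘ g` on a tuple of vectors with
degrees `a`: the sum over shuffle permutations `σ ∈ S([1,j],…,[(i-1)j+1,ij])`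
of `p(σ;a) • f(g(block₁ of v∘σ) ⊗ … ⊗ g(blockᵢ of v∘σ))`. -/
def extCompVal {k Γ U V W : Type*} [Field k] [AddCommGroup Γ]
    [AddCommGroup U] [Module k U] [AddCommGroup V] [Module k V]
    [AddCommGroup W] [Module k W]
    (ε : Γ → Γ → k) {i j : ℕ}
    (f : MultilinearMap k (fun _ : Fin i => U) V)
    (g : MultilinearMap k (fun _ : Fin j => W) U)
    (a : Fin (i * j) → Γ) (w : Fin (i * j) → W) : V :=
  ∑ σ ∈ Finset.univ.filter
      (fun σ : Equiv.Perm (Fin (i * j)) =>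
        ∀ m m' : Fin (i * j), m < m' → (m : ℕ) / j = (m' : ℕ) / j → σ m < σ m'),
    pMult ε σ a • f (fun l : Fin i => g (fun m : Fin j => w (σ (blockIdx l m))))

lemma swap_adj_lt {n : ℕ} {l m q1 q2 : Fin n} (hlm : (l : ℕ) + 1 = m)
    (h12 : q1 < q2) (hne : ¬(q1 = l ∧ q2 = m)) :
    Equiv.swap l m q1 < Equiv.swap l m q2 := by
  rw [Fin.lt_def] at h12 ⊢
  rw [Equiv.swap_apply_def, Equiv.swap_apply_def]
  split_ifs <;> simp_all [Fin.ext_iff] <;> omega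

lemma inv_mem_swap {n : ℕ} (σ : Equiv.Perm (Fin n)) {l m q1 q2 : Fin n}
    (hlm : (l : ℕ) + 1 = m) (h : (σ⁻¹ m : ℕ) = (σ⁻¹ l : ℕ) + 1)
    (h12 : q1 < q2) (hinv : σ⁻¹ q2 < σ⁻¹ q1) :
    Equiv.swap l m q1 < Equiv.swap l m q2 ∧
      σ⁻¹ (Equiv.swap l m q2) < σ⁻¹ (Equiv.swap l m q1) := by
  have hne : ¬(q1 = l ∧ q2 = m) := by
    rintro ⟨rfl, rfl⟩
    rw [Fin.lt_def] at hinv; omega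
  refine ⟨swap_adj_lt hlm h12 hne, ?_⟩
  have key : ∀ x : Fin n, ((σ⁻¹ (Equiv.swap l m x) : Fin n) : ℕ) =
      if x = l then (σ⁻¹ l : ℕ) + 1 else if x = m then (σ⁻¹ l : ℕ) else (σ⁻¹ x : ℕ) := by
    intro x
    rw [Equiv.swap_apply_def]
    split_ifs with hx1 hx2 <;> simp_all
  have hinj : ∀ x y : Fin n, x = y ∨ ((σ⁻¹ x : Fin n) : ℕ) ≠ (σ⁻¹ y : ℕ) := by
    intro x y
    rcases eq_or_ne x y with rfl | hxy
    · exact Or.inl rfl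
    · exact Or.inr fun hc => hxy (σ⁻¹.injective (Fin.ext hc))
  rw [Fin.lt_def] at hinv h12 ⊢
  rw [key, key]
  have e1l := hinj q1 l; have e1m := hinj q1 m
  have e2l := hinj q2 l; have e2m := hinj q2 m
  split_ifs <;> simp_all [Fin.ext_iff] <;> omega

lemma pMult_eq_of_adj {k Γ : Type*} [Field k] [AddCommGroup Γ] (ε : Γ → Γ → k) {n : ℕ}
    (σ : Equiv.Perm (Fin n)) (a : Fin n → Γ) {l m : Fin n} (hlm : (l : ℕ) + 1 = m)
    (h : (σ⁻¹ m : ℕ) = (σ⁻¹ l : ℕ) + 1) :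
    pMult ε σ (fun q => a (Equiv.swap l m q)) = pMult ε σ a := by
  unfold pMult
  congr 1
  refine Finset.prod_nbij' (fun q => (Equiv.swap l m q.1, Equiv.swap l m q.2))
    (fun q => (Equiv.swap l m q.1, Equiv.swap l m q.2)) ?_ ?_ ?_ ?_ ?_
  · intro q hq
    rw [Finset.mem_filter] at hq ⊢
    exact ⟨Finset.mem_univ _, inv_mem_swap σ hlm h hq.2.1 hq.2.2⟩
  · intro q hq
    rw [Finset.mem_filter] at hq ⊢
    exact ⟨Finset.mem_univ _, inv_mem_swap σ hlm h hq.2.1 hq.2.2⟩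
  · intro q _; simp
  · intro q _; simp
  · intro q _; simp

lemma pMult_swap_mul {k Γ : Type*} [Field k] [AddCommGroup Γ]
    (E : CommutationFactor k Γ) {n : ℕ} (σ : Equiv.Perm (Fin n))
    (a : Fin n → Γ) {l m : Fin n} (hlm : (l : ℕ) + 1 = m) :
    pMult E.ε σ a =
      (-(E.ε (a l) (a m))) *
        pMult E.ε (Equiv.swap l m * σ) (fun q => a (Equiv.swap l m q)) := by
  have hlm' : l ≠ m := Fin.ne_of_val_ne (by omega)
  have hlltm : l < m := by rw [Fin.lt_def]; omega
  have hτinv : ∀ x, (Equiv.swap l m * σ)⁻¹ (Equiv.swap l m x) = σ⁻¹ x := by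
    intro x
    simp [mul_inv_rev, Equiv.Perm.mul_apply]
  have hτinv2 : ∀ x, (Equiv.swap l m * σ)⁻¹ x = σ⁻¹ (Equiv.swap l m x) := by
    intro x
    have := hτinv (Equiv.swap l m x)
    rwa [Equiv.swap_apply_self] at this
  have hsign : (((Equiv.Perm.sign (Equiv.swap l m * σ) : ℤ)) : k)
      = -(((Equiv.Perm.sign σ : ℤ)) : k) := by
    rw [Equiv.Perm.sign_mul, Equiv.Perm.sign_swap hlm']
    push_cast
    ring
  set B := Finset.univ.filter
      (fun q : Fin n × Fin n => q.1 < q.2 ∧ σ⁻¹ q.2 < σ⁻¹ q.1) with hB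
  set C := Finset.univ.filter
      (fun q : Fin n × Fin n => q.1 < q.2 ∧
        (Equiv.swap l m * σ)⁻¹ q.2 < (Equiv.swap l m * σ)⁻¹ q.1) with hC
  have hmaps : ∀ q ∈ B.erase (l, m),
      (Equiv.swap l m q.1, Equiv.swap l m q.2) ∈ C.erase (l, m) := by
    rintro ⟨q1, q2⟩ hq
    rw [Finset.mem_erase, hB, Finset.mem_filter] at hq
    obtain ⟨hqne, -, h12, hinv⟩ := hq
    rw [Finset.mem_erase, hC, Finset.mem_filter]
    refine ⟨?_, Finset.mem_univ _, ?_, ?_⟩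
    · intro hc
      rw [Prod.mk.injEq] at hc
      have e1 : q1 = m := by
        have := congrArg (Equiv.swap l m) hc.1
        rwa [Equiv.swap_apply_self, Equiv.swap_apply_left] at this
      have e2 : q2 = l := by
        have := congrArg (Equiv.swap l m) hc.2
        rwa [Equiv.swap_apply_self, Equiv.swap_apply_right] at this
      have v1 : (q1 : ℕ) = m := congrArg Fin.val e1
      have v2 : (q2 : ℕ) = l := congrArg Fin.val e2
      have h12' : (q1 : ℕ) < (q2 : ℕ) := h12
      omega
    · refine swap_adj_lt hlm h12 ?_
      rintro ⟨rfl, rfl⟩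
      exact hqne rfl
    · rw [hτinv, hτinv]
      exact hinv
  have hmaps2 : ∀ q ∈ C.erase (l, m),
      (Equiv.swap l m q.1, Equiv.swap l m q.2) ∈ B.erase (l, m) := by
    rintro ⟨q1, q2⟩ hq
    rw [Finset.mem_erase, hC, Finset.mem_filter] at hq
    obtain ⟨hqne, -, h12, hinv⟩ := hq
    rw [hτinv2, hτinv2] at hinv
    rw [Finset.mem_erase, hB, Finset.mem_filter]
    refine ⟨?_, Finset.mem_univ _, ?_, hinv⟩
    · intro hc
      rw [Prod.mk.injEq] at hc
      have e1 : q1 = m := by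
        have := congrArg (Equiv.swap l m) hc.1
        rwa [Equiv.swap_apply_self, Equiv.swap_apply_left] at this
      have e2 : q2 = l := by
        have := congrArg (Equiv.swap l m) hc.2
        rwa [Equiv.swap_apply_self, Equiv.swap_apply_right] at this
      have v1 : (q1 : ℕ) = m := congrArg Fin.val e1
      have v2 : (q2 : ℕ) = l := congrArg Fin.val e2
      have h12' : (q1 : ℕ) < (q2 : ℕ) := h12
      omega
    · refine swap_adj_lt hlm h12 ?_
      rintro ⟨rfl, rfl⟩
      exact hqne rfl
  have hkey : ∏ q ∈ C.erase (l, m), E.ε (a (Equiv.swap l m q.1)) (a (Equiv.swap l m q.2))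
      = ∏ q ∈ B.erase (l, m), E.ε (a q.1) (a q.2) := by
    refine Finset.prod_nbij' (fun q => (Equiv.swap l m q.1, Equiv.swap l m q.2))
      (fun q => (Equiv.swap l m q.1, Equiv.swap l m q.2))
      hmaps2 hmaps ?_ ?_ ?_
    · intro q _; simp
    · intro q _; simp
    · intro q _; simp
  unfold pMult
  rw [hsign, ← hB, ← hC]
  by_cases hc : σ⁻¹ m < σ⁻¹ l
  · have hmemB : (l, m) ∈ B := by
      rw [hB, Finset.mem_filter]
      exact ⟨Finset.mem_univ _, hlltm, hc⟩
    have hmemC : (l, m) ∉ C := by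
      rw [hC, Finset.mem_filter]
      rintro ⟨-, -, hlt⟩
      rw [hτinv2, hτinv2, Equiv.swap_apply_left, Equiv.swap_apply_right] at hlt
      exact absurd hc (asymm hlt)
    rw [← Finset.mul_prod_erase B _ hmemB, ← Finset.erase_eq_of_notMem hmemC, hkey]
    ring
  · have hlt : σ⁻¹ l < σ⁻¹ m := by
      rcases lt_trichotomy (σ⁻¹ l) (σ⁻¹ m) with h | h | h
      · exact h
      · exact absurd (σ⁻¹.injective h) hlm'
      · exact absurd h hc
    have hmemB : (l, m) ∉ B := by
      rw [hB, Finset.mem_filter]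
      rintro ⟨-, -, hlt'⟩
      exact hc hlt'
    have hmemC : (l, m) ∈ C := by
      rw [hC, Finset.mem_filter]
      refine ⟨Finset.mem_univ _, hlltm, ?_⟩
      rw [hτinv2, hτinv2, Equiv.swap_apply_left, Equiv.swap_apply_right]
      exact hlt
    rw [← Finset.mul_prod_erase C _ hmemC, ← Finset.erase_eq_of_notMem hmemB, hkey]
    simp only [Equiv.swap_apply_left, Equiv.swap_apply_right]
    have hms := E.mul_symm (a l) (a m)
    set K := ∏ q ∈ B.erase (l, m), E.ε (a q.1) (a q.2)
    set s := (((Equiv.Perm.sign σ : ℤ)) : k)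
    calc s * K = (E.ε (a l) (a m) * E.ε (a m) (a l)) * (s * K) := by rw [hms]; ring
    _ = -E.ε (a l) (a m) * (-s * (E.ε (a m) (a l) * K)) := by ring

lemma perm_apply_inv_self {α : Type*} (σ : Equiv.Perm α) (x : α) : σ (σ⁻¹ x) = x :=
  σ.apply_symm_apply x

lemma perm_inv_apply_self {α : Type*} (σ : Equiv.Perm α) (x : α) : σ⁻¹ (σ x) = x :=
  σ.symm_apply_apply x

/-- The exterior composition of ε-alternating multilinear maps is
ε-alternating.  Here `g` is homogeneous of degree `γ`. -/
theorem stmt6 {k Γ U V W : Type*} [Field k] [AddCommGroup Γ] [DecidableEq Γ]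
    [AddCommGroup U] [Module k U] [AddCommGroup V] [Module k V]
    [AddCommGroup W] [Module k W]
    (E : CommutationFactor k Γ)
    (𝒰 : Γ → Submodule k U) [DirectSum.Decomposition 𝒰]
    (𝒲 : Γ → Submodule k W) [DirectSum.Decomposition 𝒲]
    {i j : ℕ} (γ : Γ)
    (f : MultilinearMap k (fun _ : Fin i => U) V)
    (g : MultilinearMap k (fun _ : Fin j => W) U)
    (hf : IsEpsAlt E.ε 𝒰 f) (hg : IsEpsAlt E.ε 𝒲 g)
    (hgdeg : ∀ (b : Fin j → Γ) (w : Fin j → W), (∀ m, w m ∈ 𝒲 (b m)) →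
      g w ∈ 𝒰 (γ + ∑ m, b m)) :
    ∀ (a : Fin (i * j) → Γ) (w : Fin (i * j) → W), (∀ m, w m ∈ 𝒲 (a m)) →
      ∀ l m : Fin (i * j), (l : ℕ) + 1 = (m : ℕ) →
        extCompVal E.ε f g a w
          = (-(E.ε (a l) (a m))) •
            extCompVal E.ε f g (fun q => a (Equiv.swap l m q))
              (fun q => w (Equiv.swap l m q)) := by
  intro a w hw l m hlm
  have hij : 0 < i * j := l.pos
  have hj : 0 < j := by
    rcases Nat.eq_zero_or_pos j with rfl | h
    · simp at hij
    · exact h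
  have hlm' : l ≠ m := Fin.ne_of_val_ne (by omega)
  have hlltm : l < m := by rw [Fin.lt_def]; omega
  have hdivblock : ∀ (l'' : Fin i) (m'' : Fin j),
      ((blockIdx l'' m'' : Fin (i * j)) : ℕ) / j = l''.1 := by
    intro l'' m''
    show (l''.1 * j + m''.1) / j = l''.1
    rw [Nat.add_comm, Nat.add_mul_div_right _ _ hj, Nat.div_eq_of_lt m''.isLt, Nat.zero_add]
  unfold extCompVal
  rw [Finset.smul_sum]
  set S := Finset.univ.filter
      (fun σ : Equiv.Perm (Fin (i * j)) =>
        ∀ p p' : Fin (i * j), p < p' → (p : ℕ) / j = (p' : ℕ) / j → σ p < σ p') with hS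
  set P := fun σ : Equiv.Perm (Fin (i * j)) =>
      ((σ⁻¹ l : Fin (i * j)) : ℕ) / j = ((σ⁻¹ m : Fin (i * j)) : ℕ) / j with hP
  rw [← Finset.sum_filter_add_sum_filter_not S P
        (fun σ => pMult E.ε σ a • f (fun l' => g fun m' => w (σ (blockIdx l' m')))),
      ← Finset.sum_filter_add_sum_filter_not S P
        (fun σ => (-(E.ε (a l) (a m))) • (pMult E.ε σ (fun q => a (Equiv.swap l m q)) •
          f (fun l' => g fun m' => w (Equiv.swap l m (σ (blockIdx l' m'))))))]
  congr 1
  · -- same block case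
    refine Finset.sum_congr rfl ?_
    intro σ hσ
    rw [Finset.mem_filter] at hσ
    obtain ⟨hσS, hPσ⟩ := hσ
    rw [hS, Finset.mem_filter] at hσS
    have hs := hσS.2
    simp only [hP] at hPσ
    have hinvne : σ⁻¹ l ≠ σ⁻¹ m := fun hc => hlm' (σ⁻¹.injective hc)
    have hlt : ((σ⁻¹ l : Fin (i * j)) : ℕ) < ((σ⁻¹ m : Fin (i * j)) : ℕ) := by
      rcases lt_trichotomy ((σ⁻¹ l : Fin (i * j)) : ℕ) ((σ⁻¹ m : Fin (i * j)) : ℕ)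
        with h | h | h
      · exact h
      · exact absurd (Fin.ext h) hinvne
      · have := hs (σ⁻¹ m) (σ⁻¹ l) (Fin.lt_def.mpr h) hPσ.symm
        rw [perm_apply_inv_self, perm_apply_inv_self, Fin.lt_def] at this
        omega
    have hadj : ((σ⁻¹ m : Fin (i * j)) : ℕ) = ((σ⁻¹ l : Fin (i * j)) : ℕ) + 1 := by
      by_contra hcon
      have hq2 : ((σ⁻¹ l : Fin (i * j)) : ℕ) + 1 < i * j :=
        lt_of_le_of_lt (by omega) (σ⁻¹ m).isLt
      have hd1 : ((σ⁻¹ l : Fin (i * j)) : ℕ) / j ≤ (((σ⁻¹ l : Fin (i * j)) : ℕ) + 1) / j :=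
        Nat.div_le_div_right (by omega)
      have hd2 : (((σ⁻¹ l : Fin (i * j)) : ℕ) + 1) / j ≤ ((σ⁻¹ m : Fin (i * j)) : ℕ) / j :=
        Nat.div_le_div_right (by omega)
      have hdq1 : ((σ⁻¹ l : Fin (i * j)) : ℕ) / j = ((⟨((σ⁻¹ l : Fin (i * j)) : ℕ) + 1, hq2⟩ :
          Fin (i * j)) : ℕ) / j := by
        exact le_antisymm hd1 (by rw [hPσ]; exact hd2)
      have hdq2 : ((⟨((σ⁻¹ l : Fin (i * j)) : ℕ) + 1, hq2⟩ : Fin (i * j)) : ℕ) / j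
          = ((σ⁻¹ m : Fin (i * j)) : ℕ) / j := by
        rw [← hdq1]; exact hPσ
      have hA := hs (σ⁻¹ l) ⟨((σ⁻¹ l : Fin (i * j)) : ℕ) + 1, hq2⟩
        (by rw [Fin.lt_def]; show ((σ⁻¹ l : Fin (i * j)) : ℕ) < ((σ⁻¹ l : Fin (i * j)) : ℕ) + 1; omega) hdq1
      have hB := hs ⟨((σ⁻¹ l : Fin (i * j)) : ℕ) + 1, hq2⟩ (σ⁻¹ m)
        (by rw [Fin.lt_def]; show ((σ⁻¹ l : Fin (i * j)) : ℕ) + 1 < ((σ⁻¹ m : Fin (i * j)) : ℕ); omega) hdq2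
      rw [perm_apply_inv_self] at hA
      rw [perm_apply_inv_self] at hB
      rw [Fin.lt_def] at hA hB
      omega
    -- block and in-block indices
    have hblt : ((σ⁻¹ l : Fin (i * j)) : ℕ) / j < i := by
      rw [Nat.div_lt_iff_lt_mul hj]
      exact (σ⁻¹ l).isLt
    have hmod1 : ((σ⁻¹ l : Fin (i * j)) : ℕ) % j < j := Nat.mod_lt _ hj
    have hmod : ((σ⁻¹ l : Fin (i * j)) : ℕ) % j + 1 < j := by
      by_contra hcon
      have heq : ((σ⁻¹ l : Fin (i * j)) : ℕ) % j = j - 1 := by omega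
      have hdvd : j ∣ ((σ⁻¹ l : Fin (i * j)) : ℕ) + 1 := by
        have hdm := Nat.div_add_mod ((σ⁻¹ l : Fin (i * j)) : ℕ) j
        refine ⟨((σ⁻¹ l : Fin (i * j)) : ℕ) / j + 1, ?_⟩
        rw [Nat.mul_add, Nat.mul_one]
        generalize j * (((σ⁻¹ l : Fin (i * j)) : ℕ) / j) = A at hdm ⊢
        omega
      have hPσ' := hPσ
      rw [hadj, Nat.succ_div, if_pos hdvd] at hPσ'
      omega
    set b : Fin i := ⟨((σ⁻¹ l : Fin (i * j)) : ℕ) / j, hblt⟩ with hbdef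
    set rr : Fin j := ⟨((σ⁻¹ l : Fin (i * j)) : ℕ) % j, hmod1⟩ with hrrdef
    set rr1 : Fin j := ⟨((σ⁻¹ l : Fin (i * j)) : ℕ) % j + 1, hmod⟩ with hrr1def
    have hx : ((σ⁻¹ l : Fin (i * j)) : ℕ) / j * j + ((σ⁻¹ l : Fin (i * j)) : ℕ) % j
        = ((σ⁻¹ l : Fin (i * j)) : ℕ) := Nat.div_add_mod' _ _
    have hbr : blockIdx b rr = σ⁻¹ l := by
      apply Fin.ext
      exact hx
    have hbr1 : blockIdx b rr1 = σ⁻¹ m := by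
      apply Fin.ext
      show ((σ⁻¹ l : Fin (i * j)) : ℕ) / j * j + (((σ⁻¹ l : Fin (i * j)) : ℕ) % j + 1)
        = ((σ⁻¹ m : Fin (i * j)) : ℕ)
      rw [hadj, ← Nat.add_assoc, hx]
    have hwv : ∀ m' : Fin j, w (σ (blockIdx b m')) ∈ 𝒲 (a (σ (blockIdx b m'))) :=
      fun m' => hw _
    have hgeq := hg (fun m' => a (σ (blockIdx b m'))) (fun m' => w (σ (blockIdx b m')))
      hwv rr rr1 rfl
    beta_reduce at hgeq
    rw [hbr, hbr1, perm_apply_inv_self, perm_apply_inv_self] at hgeq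
    -- now rewrite pMult and split off the scalar
    rw [pMult_eq_of_adj E.ε σ a hlm hadj,
      smul_comm (-(E.ε (a l) (a m))) (pMult E.ε σ a)]
    congr 1
    -- goal : f U = (-ε) • f U'
    set u' : Fin i → U :=
      (fun l' => g fun m' => w (Equiv.swap l m (σ (blockIdx l' m')))) with hu'
    have h2 := f.map_update_smul u' b (-(E.ε (a l) (a m))) (u' b)
    rw [Function.update_eq_self] at h2
    rw [← h2]
    congr 1
    funext l'
    rcases eq_or_ne l' b with rfl | hl'
    · rw [Function.update_self, hgeq]
      congr 1
      show g (fun q => w (σ (blockIdx b (Equiv.swap rr rr1 q))))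
          = g fun m' => w (Equiv.swap l m (σ (blockIdx b m')))
      congr 1
      funext m'
      show w (σ (blockIdx b (Equiv.swap rr rr1 m'))) = w (Equiv.swap l m (σ (blockIdx b m')))
      rcases eq_or_ne m' rr with rfl | h1
      · rw [Equiv.swap_apply_left, hbr1, hbr, perm_apply_inv_self,
          perm_apply_inv_self, Equiv.swap_apply_left]
      · rcases eq_or_ne m' rr1 with rfl | h2'
        · rw [Equiv.swap_apply_right, hbr, hbr1, perm_apply_inv_self,
            perm_apply_inv_self, Equiv.swap_apply_right]
        · rw [Equiv.swap_apply_of_ne_of_ne h1 h2']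
          have hne1 : σ (blockIdx b m') ≠ l := by
            intro hc
            apply h1
            have hbm : blockIdx b m' = blockIdx b rr := by
              rw [hbr, ← hc, perm_inv_apply_self]
            have hv := congrArg Fin.val hbm
            exact Fin.ext (Nat.add_left_cancel hv)
          have hne2 : σ (blockIdx b m') ≠ m := by
            intro hc
            apply h2'
            have hbm : blockIdx b m' = blockIdx b rr1 := by
              rw [hbr1, ← hc, perm_inv_apply_self]
            have hv := congrArg Fin.val hbm
            exact Fin.ext (Nat.add_left_cancel hv)
          rw [Equiv.swap_apply_of_ne_of_ne hne1 hne2]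
    · rw [Function.update_of_ne hl', hu']
      congr 1
      funext m'
      have hne1 : σ (blockIdx l' m') ≠ l := by
        intro hc
        apply hl'
        have hbm : blockIdx l' m' = σ⁻¹ l := by
          rw [← hc, perm_inv_apply_self]
        have hd := congrArg (fun z : Fin (i * j) => (z : ℕ) / j) hbm
        simp only [hdivblock] at hd
        exact Fin.ext hd
      have hne2 : σ (blockIdx l' m') ≠ m := by
        intro hc
        apply hl'
        have hbm : blockIdx l' m' = σ⁻¹ m := by
          rw [← hc, perm_inv_apply_self]
        have hd := congrArg (fun z : Fin (i * j) => (z : ℕ) / j) hbm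
        simp only [hdivblock] at hd
        apply Fin.ext
        show (l' : ℕ) = ((σ⁻¹ l : Fin (i * j)) : ℕ) / j
        rw [hd, ← hPσ]
      rw [Equiv.swap_apply_of_ne_of_ne hne1 hne2]
  · -- different block case
    have hmem : ∀ σ₀ ∈ S.filter (fun σ => ¬ P σ),
        Equiv.swap l m * σ₀ ∈ S.filter (fun σ => ¬ P σ) := by
      intro σ hσ
      rw [Finset.mem_filter] at hσ ⊢
      obtain ⟨hσS, hnP⟩ := hσ
      rw [hS, Finset.mem_filter] at hσS ⊢
      have hs := hσS.2
      refine ⟨⟨Finset.mem_univ _, ?_⟩, ?_⟩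
      · intro p p' hpp' hdiv
        have h0 := hs p p' hpp' hdiv
        show Equiv.swap l m (σ p) < Equiv.swap l m (σ p')
        refine swap_adj_lt hlm h0 ?_
        rintro ⟨hc1, hc2⟩
        apply hnP
        have e1 : σ⁻¹ l = p := by rw [← hc1, perm_inv_apply_self]
        have e2 : σ⁻¹ m = p' := by rw [← hc2, perm_inv_apply_self]
        show ((σ⁻¹ l : Fin (i * j)) : ℕ) / j = ((σ⁻¹ m : Fin (i * j)) : ℕ) / j
        rw [e1, e2]
        exact hdiv
      · intro hc
        apply hnP
        simp only [hP] at hc ⊢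
        have e1 : (Equiv.swap l m * σ)⁻¹ l = σ⁻¹ m := by
          simp [mul_inv_rev, Equiv.Perm.mul_apply]
        have e2 : (Equiv.swap l m * σ)⁻¹ m = σ⁻¹ l := by
          simp [mul_inv_rev, Equiv.Perm.mul_apply]
        rw [e1, e2] at hc
        exact hc.symm
    refine Finset.sum_nbij' (fun σ => Equiv.swap l m * σ) (fun σ => Equiv.swap l m * σ)
      hmem hmem ?_ ?_ ?_
    · intro σ _
      exact Equiv.swap_mul_self_mul l m σ
    · intro σ _
      exact Equiv.swap_mul_self_mul l m σ
    · intro σ hσ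
      have hfun : (fun l' : Fin i => g fun m' =>
            w (Equiv.swap l m ((Equiv.swap l m * σ) (blockIdx l' m'))))
          = fun l' => g fun m' => w (σ (blockIdx l' m')) := by
        funext l'
        congr 1
        funext m'
        show w (Equiv.swap l m (Equiv.swap l m (σ (blockIdx l' m')))) = _
        rw [Equiv.swap_apply_self]
      rw [hfun]
      rw [pMult_swap_mul E σ a hlm]
      rw [mul_smul]
end

section
/- Let V be a finite-dimensional Γ-graded vector space of dimension at least 2 with a non-degenerate ε-symmetric bilinear form ( , ). Then the restriction of the bilinear form (f,g) ↦ Tr_ε(fg) to so_ε(V,( , )) is non-degenerate; in particular so_ε(V,( , )) is an ε-quadratic colour Lie algebra. -/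
/-- The submodule of endomorphisms of a `Γ`-graded vector space which are
homogeneous of degree `γ`. -/
def homDeg {k Γ V : Type*} [Field k] [AddCommGroup Γ]
    [AddCommGroup V] [Module k V]
    (𝒱 : Γ → Submodule k V) (γ : Γ) : Submodule k (Module.End k V) where
  carrier := {f | ∀ a : Γ, ∀ v ∈ 𝒱 a, f v ∈ 𝒱 (a + γ)}
  add_mem' := by
    intro f g hf hg a v hv
    simpa [LinearMap.add_apply] using Submodule.add_mem _ (hf a v hv) (hg a v hv)
  zero_mem' := by
    intro a v hv
    simp
  smul_mem' := by
    intro c f hf a v hv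
    simpa [LinearMap.smul_apply] using Submodule.smul_mem _ c (hf a v hv)

/-- The submodule of endomorphisms of degree `γ` which are ε-skew with respect
to a bilinear form `Bv`. -/
def skewDeg {k Γ V : Type*} [Field k] [AddCommGroup Γ]
    [AddCommGroup V] [Module k V]
    (ε : Γ → Γ → k) (Bv : V →ₗ[k] V →ₗ[k] k)
    (𝒱 : Γ → Submodule k V) (γ : Γ) : Submodule k (Module.End k V) where
  carrier := {f | ∀ a b : Γ, ∀ v ∈ 𝒱 a, ∀ w ∈ 𝒱 b,
    Bv (f v) w + ε γ a * Bv v (f w) = 0}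
  add_mem' := by
    intro f g hf hg a b v hv w hw
    have h1 := hf a b v hv w hw
    have h2 := hg a b v hv w hw
    simp only [LinearMap.add_apply, map_add]
    linear_combination h1 + h2
  zero_mem' := by
    intro a b v hv w hw
    simp
  smul_mem' := by
    intro c f hf a b v hv w hw
    have h1 := hf a b v hv w hw
    simp only [LinearMap.smul_apply, map_smul, smul_eq_mul]
    linear_combination c * h1

/-- The colour Lie algebra `so_ε(V, Bv)` as a submodule of `End(V)`: the span
of its homogeneous components. -/
def soSub {k Γ V : Type*} [Field k] [AddCommGroup Γ]
    [AddCommGroup V] [Module k V]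
    (ε : Γ → Γ → k) (Bv : V →ₗ[k] V →ₗ[k] k)
    (𝒱 : Γ → Submodule k V) : Submodule k (Module.End k V) :=
  ⨆ γ : Γ, (homDeg 𝒱 γ ⊓ skewDeg ε Bv 𝒱 γ)

section Aux

open TensorProduct

lemma trace_smulRight_eq {k V : Type*} [Field k] [AddCommGroup V] [Module k V]
    [FiniteDimensional k V] (φ : V →ₗ[k] k) (u : V) :
    LinearMap.trace k V (φ.smulRight u) = φ u := by
  have h : φ.smulRight u = dualTensorHom k V V (φ ⊗ₜ[k] u) := by
    ext x; simp
  rw [h, LinearMap.trace_eq_contract_apply]; simp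

namespace CommutationFactor

variable {k Γ : Type*} [Field k] [AddCommGroup Γ] (E : CommutationFactor k Γ)

lemma eps_ne (a b : Γ) : E.ε a b ≠ 0 := by
  intro h
  have := E.mul_symm a b
  rw [h, zero_mul] at this
  exact zero_ne_one this

lemma eps_zero_left (b : Γ) : E.ε 0 b = 1 := by
  have h := E.add_fst 0 0 b
  rw [add_zero] at h
  exact mul_left_cancel₀ (E.eps_ne 0 b) (by rw [← h, mul_one])

lemma eps_zero_right (a : Γ) : E.ε a 0 = 1 := by
  have h := E.add_snd a 0 0
  rw [add_zero] at h
  exact mul_left_cancel₀ (E.eps_ne a 0) (by rw [← h, mul_one])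

lemma eps_neg_left (a b : Γ) : E.ε (-a) b = E.ε b a := by
  have h := E.add_fst (-a) a b
  rw [neg_add_cancel, E.eps_zero_left] at h
  have h2 := E.mul_symm a b
  exact mul_right_cancel₀ (E.eps_ne a b) (by linear_combination -h - h2)

lemma eps_neg_right (a b : Γ) : E.ε a (-b) = E.ε b a := by
  have h := E.add_snd a (-b) b
  rw [neg_add_cancel, E.eps_zero_right] at h
  have h2 := E.mul_symm a b
  exact mul_right_cancel₀ (E.eps_ne a b) (by linear_combination -h - h2)

lemma eps_neg_neg (a b : Γ) : E.ε (-a) (-b) = E.ε a b := by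
  rw [E.eps_neg_left a (-b), E.eps_neg_left b a]

lemma eps_sq (a : Γ) : E.ε a a * E.ε a a = 1 := E.mul_symm a a

end CommutationFactor

end Aux

/-- The restriction of the bilinear form `(f,g) ↦ Tr_ε(fg)` to
`so_ε(V, Bv)` is non-degenerate. -/
theorem stmt9 {k Γ V : Type*} [Field k] [AddCommGroup Γ] [DecidableEq Γ]
    [AddCommGroup V] [Module k V] [FiniteDimensional k V]
    (h2 : (2 : k) ≠ 0) (hdim : 2 ≤ Module.finrank k V)
    (E : CommutationFactor k Γ)
    (𝒱 : Γ → Submodule k V) [DirectSum.Decomposition 𝒱]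
    (Bv : V →ₗ[k] V →ₗ[k] k)
    (hBvdeg : ∀ a b : Γ, a + b ≠ 0 → ∀ v ∈ 𝒱 a, ∀ w ∈ 𝒱 b, Bv v w = 0)
    (hBvsymm : ∀ a b : Γ, ∀ v ∈ 𝒱 a, ∀ w ∈ 𝒱 b, Bv v w = E.ε a b * Bv w v)
    (hBvnd : ∀ v : V, (∀ w, Bv v w = 0) → v = 0)
    (calE : Module.End k V)
    (hcalE : ∀ γ : Γ, ∀ v ∈ 𝒱 γ, calE v = E.ε γ γ • v) :
    ∀ f ∈ soSub E.ε Bv 𝒱,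
      (∀ g ∈ soSub E.ε Bv 𝒱, LinearMap.trace k V (calE * (f * g)) = 0) →
        f = 0 := by
  classical
  intro f hf htr
  have htop : (⨆ γ : Γ, 𝒱 γ) = ⊤ :=
    (DirectSum.Decomposition.isInternal 𝒱).submodule_iSup_eq_top
  have hmem : ∀ x : V, x ∈ ⨆ γ : Γ, 𝒱 γ := fun x => htop ▸ Submodule.mem_top
  -- a linear functional vanishing on homogeneous elements vanishes
  have hvanish : ∀ (ψ : V →ₗ[k] k), (∀ a : Γ, ∀ u ∈ 𝒱 a, ψ u = 0) → ∀ x, ψ x = 0 := by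
    intro ψ h x
    refine Submodule.iSup_induction 𝒱 (motive := fun y => ψ y = 0) (hmem x) h (map_zero ψ) ?_
    intro y z hy hz; rw [map_add, hy, hz, add_zero]
  -- non-degeneracy in the second slot
  have hnd2 : ∀ x : V, (∀ a : Γ, ∀ u ∈ 𝒱 a, Bv u x = 0) → x = 0 := by
    intro x hx
    have hcomp : ∀ γ : Γ, (DirectSum.decompose 𝒱 x γ : V) = 0 := by
      intro γ
      apply hBvnd
      apply hvanish (Bv ((DirectSum.decompose 𝒱 x γ : V)))
      intro c u hu
      by_cases hzc : γ + c = 0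
      · have hsym := hBvsymm γ c (DirectSum.decompose 𝒱 x γ : V) (SetLike.coe_mem _) u hu
        have hx0 := hx c u hu
        have hexp : Bv u x = ∑ γ' ∈ (DirectSum.decompose 𝒱 x).support,
            Bv u (DirectSum.decompose 𝒱 x γ' : V) := by
          conv_lhs => rw [← DirectSum.sum_support_decompose 𝒱 x]
          rw [map_sum]
        have hBuxγ : Bv u (DirectSum.decompose 𝒱 x γ : V) = 0 := by
          by_cases hγs : γ ∈ (DirectSum.decompose 𝒱 x).support
          · have hsum : ∑ γ' ∈ (DirectSum.decompose 𝒱 x).support,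
                Bv u (DirectSum.decompose 𝒱 x γ' : V)
                = Bv u (DirectSum.decompose 𝒱 x γ : V) := by
              refine Finset.sum_eq_single_of_mem γ hγs ?_
              intro γ' _ hne
              refine hBvdeg c γ' ?_ u hu _ (SetLike.coe_mem _)
              intro h
              apply hne
              have h1 : γ' = -c := eq_neg_of_add_eq_zero_right h
              have h2 : γ = -c := eq_neg_of_add_eq_zero_left hzc
              rw [h1, h2]
            rw [← hsum, ← hexp, hx0]
          · rw [DFinsupp.notMem_support_iff.mp hγs]
            simp
        rw [hsym, hBuxγ, mul_zero]
      · exact hBvdeg γ c hzc _ (SetLike.coe_mem _) u hu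
    conv_lhs => rw [← DirectSum.sum_support_decompose 𝒱 x]
    exact Finset.sum_eq_zero (fun γ _ => hcomp γ)
  -- calE is an involution
  have hE2 : ∀ x : V, calE (calE x) = x := by
    intro x
    refine Submodule.iSup_induction 𝒱 (motive := fun y => calE (calE y) = y) (hmem x) ?_ (by simp) ?_
    · intro γ y hy
      rw [hcalE γ y hy, map_smul, hcalE γ y hy, smul_smul, E.eps_sq, one_smul]
    · intro y z hy hz; rw [map_add, map_add, hy, hz]
  -- key identity from the trace hypothesis
  have key : ∀ (a b : Γ) (v : V), v ∈ 𝒱 a → ∀ w ∈ 𝒱 b,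
      Bv v (calE (f w)) = E.ε b a * Bv w (calE (f v)) := by
    intro a b v hv w hw
    set g : Module.End k V := (Bv v).smulRight w - E.ε b a • (Bv w).smulRight v with hgdef
    have hgx : ∀ x : V, g x = Bv v x • w - E.ε b a • (Bv w x • v) := by
      intro x; simp [hgdef, smul_smul]
    have hghom : g ∈ homDeg 𝒱 (a + b) := by
      intro c x hx
      have h1 : (Bv v) x • w ∈ 𝒱 (c + (a + b)) := by
        by_cases hca : a + c = 0
        · rw [show c + (a + b) = b by
            rw [show c + (a + b) = a + c + b by abel, hca, zero_add]]
          exact Submodule.smul_mem _ _ hw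
        · rw [hBvdeg a c hca v hv x hx, zero_smul]; exact Submodule.zero_mem _
      have h2 : (Bv w) x • v ∈ 𝒱 (c + (a + b)) := by
        by_cases hcb : b + c = 0
        · rw [show c + (a + b) = a by
            rw [show c + (a + b) = b + c + a by abel, hcb, zero_add]]
          exact Submodule.smul_mem _ _ hv
        · rw [hBvdeg b c hcb w hw x hx, zero_smul]; exact Submodule.zero_mem _
      rw [hgx x]
      exact Submodule.sub_mem _ h1 (Submodule.smul_mem _ _ h2)
    have hgskew : g ∈ skewDeg E.ε Bv 𝒱 (a + b) := by
      intro c d x hx y hy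
      have e1 : Bv (g x) y = Bv v x * Bv w y - E.ε b a * (Bv w x * Bv v y) := by
        rw [hgx x]
        simp [smul_eq_mul, mul_comm, mul_left_comm]
      have e2 : Bv x (g y) = Bv v y * (E.ε c b * Bv w x)
          - E.ε b a * (Bv w y * (E.ε c a * Bv v x)) := by
        rw [hgx y]
        rw [map_sub, map_smul, map_smul, map_smul, smul_eq_mul, smul_eq_mul, smul_eq_mul,
          hBvsymm c b x hx w hw, hBvsymm c a x hx v hv]
      have T1 : Bv v x * (Bv w y * (1 - E.ε (a + b) c * E.ε c a * E.ε b a)) = 0 := by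
        by_cases hca : a + c = 0
        · have hc : c = -a := eq_neg_of_add_eq_zero_right hca
          subst hc
          have hb : 1 - E.ε (a + b) (-a) * E.ε (-a) a * E.ε b a = 0 := by
            rw [E.add_fst a b (-a), E.eps_neg_right a a, E.eps_neg_right b a, E.eps_neg_left a a]
            linear_combination (-(E.ε a b * E.ε b a)) * E.eps_sq a - E.mul_symm a b
          linear_combination (Bv v x * Bv w y) * hb
        · rw [hBvdeg a c hca v hv x hx]; ring
      have T2 : Bv w x * (Bv v y * (E.ε (a + b) c * E.ε c b - E.ε b a)) = 0 := by
        by_cases hcb : b + c = 0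
        · have hc : c = -b := eq_neg_of_add_eq_zero_right hcb
          subst hc
          have hb : E.ε (a + b) (-b) * E.ε (-b) b - E.ε b a = 0 := by
            rw [E.add_fst a b (-b), E.eps_neg_right a b, E.eps_neg_right b b, E.eps_neg_left b b]
            linear_combination (E.ε b a) * E.eps_sq b
          linear_combination (Bv w x * Bv v y) * hb
        · rw [hBvdeg b c hcb w hw x hx]; ring
      rw [e1, e2]
      linear_combination T1 + T2
    have hgso : g ∈ soSub E.ε Bv 𝒱 :=
      Submodule.mem_iSup_of_mem (a + b) (Submodule.mem_inf.mpr ⟨hghom, hgskew⟩)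
    have hc : calE * (f * g)
        = (Bv v).smulRight (calE (f w)) - E.ε b a • (Bv w).smulRight (calE (f v)) := by
      ext x
      rw [Module.End.mul_apply, Module.End.mul_apply, hgx x]
      simp [map_sub, map_smul, smul_smul]
    have htrg := htr g hgso
    rw [hc, map_sub, map_smul, trace_smulRight_eq, trace_smulRight_eq, smul_eq_mul] at htrg
    linear_combination htrg
  -- skewness identity for elements of soSub
  have hf' : f ∈ ⨆ γ : Γ, (homDeg 𝒱 γ ⊓ skewDeg E.ε Bv 𝒱 γ) := hf
  have dag : ∀ (a b : Γ) (v : V), v ∈ 𝒱 a → ∀ w ∈ 𝒱 b,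
      Bv w (calE (f v)) = -(E.ε a b) * Bv v (calE (f w)) := by
    intro a b v hv w hw
    refine Submodule.iSup_induction (x := f)
      (fun γ => homDeg 𝒱 γ ⊓ skewDeg E.ε Bv 𝒱 γ)
      (motive := fun F => Bv w (calE (F v)) = -(E.ε a b) * Bv v (calE (F w))) hf' ?_ (by simp) ?_
    · intro γ F hF
      obtain ⟨hFh, hFs⟩ := Submodule.mem_inf.mp hF
      by_cases hz : a + (b + γ) = 0
      · have hγ : γ = -b + -a := by
          have h1 : (b + a) + γ = 0 := by rw [← hz]; abel
          rw [eq_neg_of_add_eq_zero_right h1, neg_add]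
        subst hγ
        have hfv : F v ∈ 𝒱 (-b) := by
          have := hFh a v hv
          rwa [show a + (-b + -a) = -b by abel] at this
        have hfw : F w ∈ 𝒱 (-a) := by
          have := hFh b w hw
          rwa [show b + (-b + -a) = -a by abel] at this
        have e1 : calE (F v) = E.ε b b • F v := by
          rw [hcalE (-b) _ hfv, E.eps_neg_neg]
        have e2 : calE (F w) = E.ε a a • F w := by
          rw [hcalE (-a) _ hfw, E.eps_neg_neg]
        have s1 := hFs a b v hv w hw
        have hk : E.ε (-b + -a) a = E.ε a b * E.ε a a := by
          rw [E.add_fst (-b) (-a) a, E.eps_neg_left b a, E.eps_neg_left a a]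
        rw [hk] at s1
        have sym : Bv w (F v) = E.ε b b * Bv (F v) w := by
          rw [hBvsymm b (-b) w hw (F v) hfv, E.eps_neg_right b b]
        rw [e1, e2, map_smul, map_smul, smul_eq_mul, smul_eq_mul]
        linear_combination E.ε b b * sym + s1 + Bv (F v) w * E.eps_sq b
      · have hfv : F v ∈ 𝒱 (a + γ) := hFh a v hv
        have hfw : F w ∈ 𝒱 (b + γ) := hFh b w hw
        have hz2 : b + (a + γ) ≠ 0 := fun h =>
          hz ((by abel : a + (b + γ) = b + (a + γ)).trans h)
        rw [hcalE _ _ hfv, hcalE _ _ hfw, map_smul, map_smul, smul_eq_mul, smul_eq_mul,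
          hBvdeg b (a + γ) hz2 w hw (F v) hfv, hBvdeg a (b + γ) hz v hv (F w) hfw]
        ring
    · intro x y hx hy
      simp only [LinearMap.add_apply, map_add]
      linear_combination hx + hy
  -- combine
  have hzero : ∀ (a b : Γ) (v : V), v ∈ 𝒱 a → ∀ w ∈ 𝒱 b, Bv v (calE (f w)) = 0 := by
    intro a b v hv w hw
    have h1 := key a b v hv w hw
    have hd := dag a b v hv w hw
    have htwo : (2 : k) * Bv v (calE (f w)) = 0 := by
      linear_combination h1 + E.ε b a * hd - Bv v (calE (f w)) * E.mul_symm a b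
    rcases mul_eq_zero.mp htwo with h | h
    · exact absurd h h2
    · exact h
  have hfw0 : ∀ (b : Γ) (w : V), w ∈ 𝒱 b → f w = 0 := by
    intro b w hw
    have hEfw : calE (f w) = 0 := by
      apply hnd2
      intro a u hu
      exact hzero a b u hu w hw
    have h := hE2 (f w)
    rw [hEfw, map_zero] at h
    exact h.symm
  ext x
  have hall : ∀ y : V, f y = 0 := by
    intro y
    refine Submodule.iSup_induction 𝒱 (motive := fun z => f z = 0) (hmem y)
      (fun γ z hz => hfw0 γ z hz) (map_zero f) ?_
    intro y z hy hz; rw [map_add, hy, hz, add_zero]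
  simp [hall x]
end
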